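/- Let X be an n×d real matrix of full column rank with singular value decomposition X = UΣVᵀ, let y ∈ ℝⁿ, and λ > 0. Let θ* = argmin_θ ‖Xθ − y‖₂² and θ_RR(λ) = argmin_θ (‖Xθ − y‖₂² + λ‖θ‖₂²). Then ‖X(θ_RR(λ) − θ*)‖₂ ≤ (λ/(σ_min(X)² + λ)) · ‖Xθ*‖₂. -/

import Mathlib

open Matrix Real Finset

/-- Euclidean (ℓ₂) norm of a finite-dimensional real vector. -/
noncomputable def enorm' {ι : Type*} [Fintype ι] (v : ι → ℝ) : ℝ :=
  Real.sqrt (∑ i, v i ^ 2)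

/-- Singular values of a real matrix: square roots of the eigenvalues of `Xᵀ X`. -/
noncomputable def singVals {n d : ℕ} (X : Matrix (Fin n) (Fin d) ℝ) : Fin d → ℝ :=
  fun i => Real.sqrt ((show (Xᵀ * X).IsHermitian by
    simpa using Matrix.isHermitian_conjTranspose_mul_self X).eigenvalues i)

/-- Smallest singular value. -/
noncomputable def sigMin {n d : ℕ} [NeZero d] (X : Matrix (Fin n) (Fin d) ℝ) : ℝ :=
  Finset.univ.inf' Finset.univ_nonempty (singVals X)

/-- Least squares solution `θ* = (XᵀX)⁻¹ Xᵀ y`. -/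
noncomputable def lsSol {n d : ℕ} (X : Matrix (Fin n) (Fin d) ℝ) (y : Fin n → ℝ) :
    Fin d → ℝ :=
  ((Xᵀ * X)⁻¹ * Xᵀ).mulVec y

/-- Ridge regression solution `θ_RR(λ) = (XᵀX + λI)⁻¹ Xᵀ y`. -/
noncomputable def rrSol {n d : ℕ} (X : Matrix (Fin n) (Fin d) ℝ) (y : Fin n → ℝ)
    (lam : ℝ) : Fin d → ℝ :=
  ((Xᵀ * X + lam • (1 : Matrix (Fin d) (Fin d) ℝ))⁻¹ * Xᵀ).mulVec y

/-! With `A = XᵀX` and `B = A + λ I`, the resolvent identity `B⁻¹ - A⁻¹ = -λ B⁻¹ A⁻¹` gives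
`θ_RR - θ* = -λ B⁻¹ θ*`, while `‖X v‖² = vᵀ A v`. In an orthonormal eigenbasis of `A` the
coordinates of `B v` are those of `v` multiplied by `μᵢ + λ ≥ σ_min² + λ`, so
`(σ_min² + λ) ‖X v‖ ≤ ‖X B v‖`; take `v = B⁻¹ θ*`. -/

namespace Matrix

lemma isUnit_of_rank_eq_card {n K : Type*} [Fintype n] [DecidableEq n] [Field K]
    {A : Matrix n n K} (h : A.rank = Fintype.card n) : IsUnit A := by
  rw [← mulVec_surjective_iff_isUnit]
  exact LinearMap.range_eq_top.mp <|
    Submodule.eq_top_of_finrank_eq (h.trans (Module.finrank_fintype_fun_eq_card K).symm)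

lemma isHermitian_transpose_mul_self {m n : Type*} [Fintype m] (X : Matrix m n ℝ) :
    (Xᵀ * X).IsHermitian :=
  isHermitian_conjTranspose_mul_self X

section
variable {m n : Type*} [Fintype m] [Fintype n]

lemma mulVec_dotProduct_mulVec (X : Matrix m n ℝ) (v w : n → ℝ) :
    X *ᵥ v ⬝ᵥ X *ᵥ w = v ⬝ᵥ (Xᵀ * X) *ᵥ w := by
  rw [← mulVec_mulVec, dotProduct_mulVec v, vecMul_transpose]

lemma mulVec_dotProduct_mulVec_of_mul_transpose_eq_one [DecidableEq n] {U : Matrix n n ℝ}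
    (hU : U * Uᵀ = 1) (v w : n → ℝ) : Uᵀ *ᵥ v ⬝ᵥ Uᵀ *ᵥ w = v ⬝ᵥ w := by
  rw [mulVec_dotProduct_mulVec, transpose_transpose, hU, one_mulVec]

lemma isUnit_transpose_mul_self_of_rank_eq [DecidableEq n] (X : Matrix m n ℝ)
    (h : X.rank = Fintype.card n) : IsUnit (Xᵀ * X) :=
  isUnit_of_rank_eq_card ((rank_transpose_mul_self X).trans h)

lemma isUnit_transpose_mul_self_add_smul_one [DecidableEq n] (X : Matrix m n ℝ) {lam : ℝ}
    (hlam : 0 < lam) : IsUnit (Xᵀ * X + lam • 1) :=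
  (PosDef.posSemidef_add (posSemidef_conjTranspose_mul_self X) (PosDef.one.smul hlam)).isUnit

end

namespace IsHermitian

variable {n : Type*} [Fintype n] [DecidableEq n] {A : Matrix n n ℝ}

lemma transpose_eigenvectorUnitary_mulVec_mulVec (hA : A.IsHermitian) (v : n → ℝ) :
    (hA.eigenvectorUnitary : Matrix n n ℝ)ᵀ *ᵥ (A *ᵥ v) =
      hA.eigenvalues * ((hA.eigenvectorUnitary : Matrix n n ℝ)ᵀ *ᵥ v) := by
  have hAt : Aᵀ = A := hA
  ext i
  simp only [Pi.mul_apply, mulVec, eigenvectorUnitary_transpose_apply]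
  rw [dotProduct_mulVec, ← mulVec_transpose, hAt, mulVec_eigenvectorBasis, smul_dotProduct,
    smul_eq_mul]

lemma mul_transpose_eigenvectorUnitary (hA : A.IsHermitian) :
    (hA.eigenvectorUnitary : Matrix n n ℝ) * (hA.eigenvectorUnitary : Matrix n n ℝ)ᵀ = 1 :=
  Unitary.mul_star_self_of_mem hA.eigenvectorUnitary.2

lemma dotProduct_mulVec_eq_sum (hA : A.IsHermitian) (v : n → ℝ) :
    v ⬝ᵥ A *ᵥ v =
      ∑ i, hA.eigenvalues i * ((hA.eigenvectorUnitary : Matrix n n ℝ)ᵀ *ᵥ v) i ^ 2 := by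
  rw [← mulVec_dotProduct_mulVec_of_mul_transpose_eq_one hA.mul_transpose_eigenvectorUnitary,
    transpose_eigenvectorUnitary_mulVec_mulVec]
  simp only [dotProduct, Pi.mul_apply]
  exact Finset.sum_congr rfl fun i _ => by ring

lemma sq_add_mul_dotProduct_mulVec_le (hA : A.IsHermitian) {s lam : ℝ} (hs₀ : 0 ≤ s)
    (hs : ∀ i, s ≤ hA.eigenvalues i) (hlam : 0 ≤ lam) (v : n → ℝ) :
    (s + lam) ^ 2 * (v ⬝ᵥ A *ᵥ v) ≤
      (A + lam • 1) *ᵥ v ⬝ᵥ A *ᵥ ((A + lam • 1) *ᵥ v) := by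
  set U : Matrix n n ℝ := (hA.eigenvectorUnitary : Matrix n n ℝ)
  have hcoord :
      Uᵀ *ᵥ ((A + lam • 1) *ᵥ v) = fun i => (hA.eigenvalues i + lam) * (Uᵀ *ᵥ v) i := by
    ext i
    simp only [add_mulVec, smul_mulVec, one_mulVec, mulVec_add, mulVec_smul,
      transpose_eigenvectorUnitary_mulVec_mulVec, U, Pi.add_apply, Pi.mul_apply, Pi.smul_apply,
      smul_eq_mul]
    ring
  rw [dotProduct_mulVec_eq_sum hA, dotProduct_mulVec_eq_sum hA, hcoord, Finset.mul_sum]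
  refine Finset.sum_le_sum fun i _ => ?_
  calc (s + lam) ^ 2 * (hA.eigenvalues i * (Uᵀ *ᵥ v) i ^ 2)
      ≤ (hA.eigenvalues i + lam) ^ 2 * (hA.eigenvalues i * (Uᵀ *ᵥ v) i ^ 2) :=
        mul_le_mul_of_nonneg_right (pow_le_pow_left₀ (by positivity) (by linarith [hs i]) 2)
          (mul_nonneg (hs₀.trans (hs i)) (sq_nonneg _))
    _ = _ := by ring

end IsHermitian

end Matrix

section
variable {m n : Type*} [Fintype m] [Fintype n]

lemma enorm'_eq_sqrt_dotProduct (v : n → ℝ) : enorm' v = √(v ⬝ᵥ v) := by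
  simp only [enorm', dotProduct, sq]

lemma enorm'_smul (c : ℝ) (v : n → ℝ) : enorm' (c • v) = |c| * enorm' v := by
  rw [enorm'_eq_sqrt_dotProduct, enorm'_eq_sqrt_dotProduct, smul_dotProduct, dotProduct_smul,
    smul_smul, smul_eq_mul, ← sq, Real.sqrt_mul (sq_nonneg c), Real.sqrt_sq_eq_abs]

lemma enorm'_mulVec (X : Matrix m n ℝ) (v : n → ℝ) :
    enorm' (X *ᵥ v) = √(v ⬝ᵥ (Xᵀ * X) *ᵥ v) := by
  rw [enorm'_eq_sqrt_dotProduct, mulVec_dotProduct_mulVec]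

lemma mul_enorm'_mulVec_le [DecidableEq n] (X : Matrix m n ℝ) {s lam : ℝ} (hs₀ : 0 ≤ s)
    (hs : ∀ i, s ≤ X.isHermitian_transpose_mul_self.eigenvalues i) (hlam : 0 ≤ lam)
    (v : n → ℝ) :
    (s + lam) * enorm' (X *ᵥ v) ≤ enorm' (X *ᵥ ((Xᵀ * X + lam • 1) *ᵥ v)) := by
  rw [enorm'_mulVec, enorm'_mulVec, ← Real.sqrt_sq (by positivity : 0 ≤ s + lam),
    ← Real.sqrt_mul (sq_nonneg _)]
  exact Real.sqrt_le_sqrt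
    (X.isHermitian_transpose_mul_self.sq_add_mul_dotProduct_mulVec_le hs₀ hs hlam v)

end

section
variable {n d : ℕ}

lemma sigMin_nonneg [NeZero d] (X : Matrix (Fin n) (Fin d) ℝ) : 0 ≤ sigMin X :=
  Finset.le_inf' _ _ fun _ _ => Real.sqrt_nonneg _

lemma sq_sigMin_le_eigenvalues [NeZero d] (X : Matrix (Fin n) (Fin d) ℝ) (i : Fin d) :
    sigMin X ^ 2 ≤ X.isHermitian_transpose_mul_self.eigenvalues i :=
  calc sigMin X ^ 2 ≤ singVals X i ^ 2 :=
        pow_le_pow_left₀ (sigMin_nonneg X) (Finset.inf'_le _ (Finset.mem_univ i)) 2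
    _ = _ := Real.sq_sqrt (eigenvalues_conjTranspose_mul_self_nonneg X i)

lemma rrSol_sub_lsSol (X : Matrix (Fin n) (Fin d) ℝ) (y : Fin n → ℝ) (lam : ℝ)
    (hA : IsUnit (Xᵀ * X)) (hB : IsUnit (Xᵀ * X + lam • 1)) :
    rrSol X y lam - lsSol X y = -lam • ((Xᵀ * X + lam • 1)⁻¹ *ᵥ lsSol X y) := by
  rw [rrSol, lsSol, ← sub_mulVec, ← Matrix.sub_mul, inv_sub_inv (iff_of_true hB hA),
    sub_add_cancel_left]
  simp [Matrix.mul_assoc, mulVec_mulVec, neg_mulVec, smul_mulVec]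

end

theorem stmt_0 {n d : ℕ} [NeZero d] (X : Matrix (Fin n) (Fin d) ℝ)
    (hrank : X.rank = d) (y : Fin n → ℝ) (lam : ℝ) (hlam : 0 < lam) :
    enorm' (X.mulVec (rrSol X y lam - lsSol X y)) ≤
      (lam / ((sigMin X) ^ 2 + lam)) * enorm' (X.mulVec (lsSol X y)) := by
  have hA := X.isUnit_transpose_mul_self_of_rank_eq (hrank.trans (Fintype.card_fin d).symm)
  have hB := X.isUnit_transpose_mul_self_add_smul_one hlam
  have hscaled := mul_enorm'_mulVec_le X (sq_nonneg (sigMin X)) (sq_sigMin_le_eigenvalues X)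
    hlam.le ((Xᵀ * X + lam • 1)⁻¹ *ᵥ lsSol X y)
  rw [mulVec_mulVec _ (Xᵀ * X + lam • 1), mul_nonsing_inv _ ((isUnit_iff_isUnit_det _).mp hB),
    one_mulVec] at hscaled
  rw [rrSol_sub_lsSol X y lam hA hB, mulVec_smul, enorm'_smul, abs_neg, abs_of_pos hlam,
    div_mul_eq_mul_div, le_div_iff₀ (by positivity), mul_assoc, mul_comm (enorm' _)]
  exact mul_le_mul_of_nonneg_left hscaled hlam.le
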